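/- Let a = diag(e^{1/2}, e^{-1/2}) ∈ SL_2(ℝ) and let H = {u(t) = [[1,t],[0,1]] : t ∈ ℝ} be its expanding horospherical subgroup. For the standard representation on ℝ², for every 0 < δ < 1 there exists c < 1 and R_0 such that for all R ≥ R_0 and every nonzero v ∈ ℝ², ∫_0^1 ‖a_{log R} u(t) v‖^{-δ} dt ≤ c · ‖v‖^{-δ}, where a_s = diag(e^{s/2}, e^{-s/2}). -/

import Mathlib

/-!
Since `‖a_{log R} u(t) v‖ ≥ √R |v₁ + t v₂|`, the integral is at most
`R^{-δ/2} ∫₀¹ |v₁ + t v₂|^{-δ} dt`, and the latter is `≤ C_δ ‖v‖^{-δ}`. Indeed, if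
`|v₁| ≤ 2|v₂|`, factoring out `|v₂|^{-δ}` leaves the integral of `|s|^{-δ}` over an interval of
length one, which is bounded uniformly because `|s|^{-δ}` is locally integrable for `δ < 1`;
otherwise `|v₁ + t v₂| ≥ |v₁| / 2` on `[0, 1]`. Taking `R` large makes `R^{-δ/2} C_δ ≤ 1/2`.
-/

open intervalIntegral MeasureTheory Set Filter Topology
open scoped Interval

section

variable {r δ : ℝ}

theorem locallyIntegrable_abs_rpow (hr : -1 < r) : LocallyIntegrable (fun s : ℝ => |s| ^ r) :=
  locallyIntegrable_of_norm_le_rpow (C := 1) (α := -r) (by simp) (by simp; linarith)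
    (Eventually.of_forall fun s => by simp [abs_of_nonneg (Real.rpow_nonneg (abs_nonneg s) r)])
    (continuous_abs.measurable.pow_const r).aestronglyMeasurable

theorem intervalIntegrable_abs_rpow (hr : -1 < r) (x y : ℝ) :
    IntervalIntegrable (fun s : ℝ => |s| ^ r) volume x y :=
  ((locallyIntegrable_abs_rpow hr).integrableOn_isCompact isCompact_uIcc).intervalIntegrable

theorem abs_add_mul_rpow_eq_mul {a b : ℝ} (hb : b ≠ 0) (t : ℝ) :
    |a + t * b| ^ r = |b| ^ r * |t + a / b| ^ r := by
  rw [← Real.mul_rpow (abs_nonneg _) (abs_nonneg _), ← abs_mul, mul_add, mul_div_cancel₀ a hb,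
    mul_comm, add_comm]

theorem intervalIntegrable_abs_add_mul_rpow (hr : -1 < r) (a b x y : ℝ) :
    IntervalIntegrable (fun t => |a + t * b| ^ r) volume x y := by
  rcases eq_or_ne b 0 with rfl | hb
  · simp
  simp_rw [abs_add_mul_rpow_eq_mul hb]
  refine IntervalIntegrable.const_mul ?_ _
  simpa using (intervalIntegrable_abs_rpow hr (x + a / b) (y + a / b)).comp_add_right (a / b)

theorem integral_abs_rpow_neg_unit_interval_le (hδ0 : 0 ≤ δ) (hδ1 : δ < 1) (A : ℝ) :
    ∫ s in A..A + 1, |s| ^ (-δ) ≤ 1 + ∫ s in (-1 : ℝ)..1, |s| ^ (-δ) := by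
  set f : ℝ → ℝ := fun s => |s| ^ (-δ)
  have hf : ∀ x y, IntervalIntegrable f volume x y := intervalIntegrable_abs_rpow (by linarith)
  have hind : Integrable ((Ioc (-1 : ℝ) 1).indicator f) :=
    (integrable_indicator_iff measurableSet_Ioc).2
      ((intervalIntegrable_iff_integrableOn_Ioc_of_le (by norm_num)).1 (hf (-1) 1))
  have hle : ∀ s, f s ≤ 1 + (Ioc (-1 : ℝ) 1).indicator f s := by
    intro s
    by_cases hs : s ∈ Ioc (-1 : ℝ) 1
    · simp [indicator_of_mem hs]
    · have : 1 ≤ |s| := by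
        rw [le_abs]
        by_contra! h
        exact hs ⟨by linarith, h.1.le⟩
      rw [indicator_of_notMem hs, add_zero]
      exact Real.rpow_le_one_of_one_le_of_nonpos this (by linarith)
  calc ∫ s in A..A + 1, f s
      ≤ ∫ s in A..A + 1, (1 + (Ioc (-1 : ℝ) 1).indicator f s) :=
        integral_mono (by linarith) (hf _ _)
          (intervalIntegrable_const.add hind.intervalIntegrable) hle
    _ = 1 + ∫ s in A..A + 1, (Ioc (-1 : ℝ) 1).indicator f s := by
        rw [integral_add intervalIntegrable_const hind.intervalIntegrable]
        simp
    _ ≤ 1 + ∫ s, (Ioc (-1 : ℝ) 1).indicator f s := by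
        gcongr
        rw [integral_of_le (by linarith)]
        exact setIntegral_le_integral hind (Eventually.of_forall fun s =>
          indicator_nonneg (fun s _ => Real.rpow_nonneg (abs_nonneg s) _) s)
    _ = 1 + ∫ s in (-1 : ℝ)..1, f s := by
        rw [MeasureTheory.integral_indicator measurableSet_Ioc, integral_of_le (by norm_num)]

theorem integral_abs_add_mul_rpow_neg_le (hδ0 : 0 ≤ δ) (hδ1 : δ < 1) (a : ℝ) {b : ℝ}
    (hb : b ≠ 0) :
    ∫ t in (0 : ℝ)..1, |a + t * b| ^ (-δ) ≤
      (1 + ∫ s in (-1 : ℝ)..1, |s| ^ (-δ)) * |b| ^ (-δ) := by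
  simp_rw [abs_add_mul_rpow_eq_mul hb, intervalIntegral.integral_const_mul]
  rw [integral_comp_add_right (fun s => |s| ^ (-δ)), zero_add, add_comm 1 (a / b),
    mul_comm (|b| ^ _)]
  gcongr
  exact integral_abs_rpow_neg_unit_interval_le hδ0 hδ1 (a / b)

theorem integral_abs_add_mul_rpow_neg_le_of_two_mul_abs_lt (hδ0 : 0 ≤ δ) {a b : ℝ}
    (hab : 2 * |b| < |a|) :
    ∫ t in (0 : ℝ)..1, |a + t * b| ^ (-δ) ≤ (|a| / 2) ^ (-δ) := by
  have hbound : ∀ t ∈ Ι (0 : ℝ) 1, ‖|a + t * b| ^ (-δ)‖ ≤ (|a| / 2) ^ (-δ) := by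
    intro t ht
    rw [uIoc_of_le zero_le_one] at ht
    have htb : |t * b| ≤ |b| := by
      rw [abs_mul, abs_of_pos ht.1]
      exact mul_le_of_le_one_left (abs_nonneg b) ht.2
    have hlow : |a| / 2 ≤ |a + t * b| := by
      have := abs_sub_abs_le_abs_sub a (-(t * b))
      rw [sub_neg_eq_add, abs_neg] at this
      linarith
    rw [Real.norm_of_nonneg (Real.rpow_nonneg (abs_nonneg _) _)]
    exact Real.rpow_le_rpow_of_nonpos (by linarith [abs_nonneg b]) hlow (by linarith)
  simpa using (le_abs_self _).trans (norm_integral_le_of_norm_le_const hbound)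

theorem integral_abs_add_mul_rpow_neg_le_sqrt (hδ0 : 0 ≤ δ) (hδ1 : δ < 1) {v : ℝ × ℝ}
    (hv : v ≠ 0) :
    ∫ t in (0 : ℝ)..1, |v.1 + t * v.2| ^ (-δ) ≤
      3 ^ δ * (1 + ∫ s in (-1 : ℝ)..1, |s| ^ (-δ)) * √(v.1 ^ 2 + v.2 ^ 2) ^ (-δ) := by
  set K := 1 + ∫ s in (-1 : ℝ)..1, |s| ^ (-δ)
  have hK : 1 ≤ K := le_add_of_nonneg_right
    (integral_nonneg (by norm_num) fun s _ => Real.rpow_nonneg (abs_nonneg s) _)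
  have hN : 0 < v.1 ^ 2 + v.2 ^ 2 := by
    rcases v with ⟨a, b⟩
    simp only [ne_eq, Prod.mk_eq_zero, not_and_or] at hv
    rcases hv with h | h <;> positivity
  have hN3 : 0 < √(v.1 ^ 2 + v.2 ^ 2) / 3 := div_pos (Real.sqrt_pos.2 hN) three_pos
  suffices ∃ w, √(v.1 ^ 2 + v.2 ^ 2) / 3 ≤ w ∧
      ∫ t in (0 : ℝ)..1, |v.1 + t * v.2| ^ (-δ) ≤ K * w ^ (-δ) by
    obtain ⟨w, hw, hint⟩ := this
    calc _ ≤ K * w ^ (-δ) := hint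
      _ ≤ K * (√(v.1 ^ 2 + v.2 ^ 2) / 3) ^ (-δ) :=
          mul_le_mul_of_nonneg_left (Real.rpow_le_rpow_of_nonpos hN3 hw (by linarith)) (by linarith)
      _ = 3 ^ δ * K * √(v.1 ^ 2 + v.2 ^ 2) ^ (-δ) := by
          rw [Real.div_rpow (Real.sqrt_nonneg _) zero_le_three,
            Real.rpow_neg zero_le_three, div_inv_eq_mul]
          ring
  rcases le_or_gt |v.1| (2 * |v.2|) with h | h
  · have hb : v.2 ≠ 0 := fun hb => hv (Prod.ext (abs_nonpos_iff.1 (by simpa [hb] using h)) hb)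
    refine ⟨|v.2|, ?_, integral_abs_add_mul_rpow_neg_le hδ0 hδ1 v.1 hb⟩
    rw [div_le_iff₀ (by norm_num), Real.sqrt_le_left (by positivity)]
    nlinarith [sq_abs v.1, sq_abs v.2, abs_nonneg v.1]
  · refine ⟨|v.1| / 2, ?_, ?_⟩
    · rw [div_le_iff₀ (by norm_num), Real.sqrt_le_left (by positivity)]
      nlinarith [sq_abs v.1, sq_abs v.2, abs_nonneg v.2]
    · exact (integral_abs_add_mul_rpow_neg_le_of_two_mul_abs_lt hδ0 h).trans
        (le_mul_of_one_le_left (Real.rpow_nonneg (by positivity) _) hK)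

theorem integral_rpow_neg_norm_le_first_coord (hδ0 : 0 ≤ δ) (hδ1 : δ < 1) {R : ℝ}
    (hR : 0 < R) {v : ℝ × ℝ} (hv : v ≠ 0) :
    ∫ t in (0 : ℝ)..1, √((√R * (v.1 + t * v.2)) ^ 2 + (v.2 / √R) ^ 2) ^ (-δ) ≤
      √R ^ (-δ) * ∫ t in (0 : ℝ)..1, |v.1 + t * v.2| ^ (-δ) := by
  have hr : 0 < √R := Real.sqrt_pos.2 hR
  -- `|0| ^ (-δ) = 0`, so the comparison below only holds off the zero of `v.1 + t * v.2`.
  have hzero : ∀ᵐ t, v.1 + t * v.2 ≠ 0 := by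
    simp only [ae_iff, ne_eq, not_not]
    refine Set.Subsingleton.measure_zero
      (fun s (hs : v.1 + s * v.2 = 0) t (ht : v.1 + t * v.2 = 0) => ?_) _
    have hb : v.2 ≠ 0 := fun hb => hv (Prod.ext (by simpa [hb] using hs) hb)
    exact mul_right_cancel₀ hb (by linarith)
  rw [integral_of_le zero_le_one, integral_of_le zero_le_one, ← MeasureTheory.integral_const_mul]
  refine integral_mono_of_nonneg
    (Eventually.of_forall fun t => Real.rpow_nonneg (Real.sqrt_nonneg _) _)
    ((intervalIntegrable_abs_add_mul_rpow (by linarith) v.1 v.2 0 1).const_mul _).1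
    (ae_restrict_of_ae ?_)
  filter_upwards [hzero] with t ht
  have hfirst :
      √R * |v.1 + t * v.2| ≤ √((√R * (v.1 + t * v.2)) ^ 2 + (v.2 / √R) ^ 2) := by
    rw [← abs_of_pos hr, ← abs_mul, abs_of_pos hr]
    exact Real.abs_le_sqrt (le_add_of_nonneg_right (sq_nonneg _))
  calc √((√R * (v.1 + t * v.2)) ^ 2 + (v.2 / √R) ^ 2) ^ (-δ)
      ≤ (√R * |v.1 + t * v.2|) ^ (-δ) :=
        Real.rpow_le_rpow_of_nonpos (mul_pos hr (abs_pos.2 ht)) hfirst (by linarith)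
    _ = √R ^ (-δ) * |v.1 + t * v.2| ^ (-δ) := Real.mul_rpow hr.le (abs_nonneg _)

end

/-- Margulis-inequality integral estimate for the standard representation of SL₂(ℝ):
for every `0 < δ < 1` there are `c < 1` and `R₀` such that for `R ≥ R₀` and every
nonzero `v ∈ ℝ²`,
`∫₀¹ ‖a_{log R} u(t) v‖^{-δ} dt ≤ c ‖v‖^{-δ}`, where
`a_{log R} u(t) v = (√R (v₁ + t v₂), v₂/√R)`. -/
theorem margulis_integral_estimate_SL2 (δ : ℝ) (hδ0 : 0 < δ) (hδ1 : δ < 1) :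
    ∃ c : ℝ, c < 1 ∧ ∃ R₀ : ℝ, 0 < R₀ ∧ ∀ R : ℝ, R₀ ≤ R →
      ∀ v : ℝ × ℝ, v ≠ 0 →
        (∫ t in (0:ℝ)..1,
            (Real.sqrt ((Real.sqrt R * (v.1 + t * v.2)) ^ 2 +
              (v.2 / Real.sqrt R) ^ 2)) ^ (-δ)) ≤
          c * (Real.sqrt (v.1 ^ 2 + v.2 ^ 2)) ^ (-δ) := by
  set C := 3 ^ δ * (1 + ∫ s in (-1 : ℝ)..1, |s| ^ (-δ))
  have hdecay : Tendsto (fun R => √R ^ (-δ) * C) atTop (𝓝 0) := by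
    simpa using ((tendsto_rpow_neg_atTop hδ0).comp Real.tendsto_sqrt_atTop).mul_const C
  obtain ⟨R₁, hR₁⟩ := eventually_atTop.1
    ((hdecay.eventually (ge_mem_nhds one_half_pos)).and (eventually_gt_atTop 0))
  refine ⟨1 / 2, by norm_num, max R₁ 1, by positivity, fun R hR v hv => ?_⟩
  obtain ⟨hsmall, hRpos⟩ := hR₁ R (le_of_max_le_left hR)
  calc _ ≤ √R ^ (-δ) * ∫ t in (0 : ℝ)..1, |v.1 + t * v.2| ^ (-δ) :=
        integral_rpow_neg_norm_le_first_coord hδ0.le hδ1 hRpos hv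
    _ ≤ √R ^ (-δ) * (C * √(v.1 ^ 2 + v.2 ^ 2) ^ (-δ)) := by
        gcongr
        exact integral_abs_add_mul_rpow_neg_le_sqrt hδ0.le hδ1 hv
    _ = (√R ^ (-δ) * C) * √(v.1 ^ 2 + v.2 ^ 2) ^ (-δ) := (mul_assoc _ _ _).symm
    _ ≤ 1 / 2 * √(v.1 ^ 2 + v.2 ^ 2) ^ (-δ) := by gcongr
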